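/- Let P be the probability measure with density 3/2 on J₁ = [0, 1/3] and 9/4 on J₂ = [2/3, 7/9] and J₃ = [8/9, 1]. For positive integers n₁, n₂, n₃, the set consisting of the n₁ midpoints of equal subintervals of J₁, n₂ of J₂, and n₃ of J₃ has distortion (1/216)·(1/n₁²) + (1/3888)·(1/n₂² + 1/n₃²) with respect to P. -/

import Mathlib

/-!
For `x` in one of the intervals `[c, c + L]`, the nearest point of the set is the midpoint of the
subinterval of length `L / n` containing `x`: it lies within `L / (2n)`, every other midpoint of
that interval is at least as far, and the points on the other intervals are at distance `≥ L / 2`.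
So on each of the `n` subintervals the integrand is `(x - m)²`, with integral `(L / n)³ / 12`, and
the interval contributes `L³ / (12 n²)`. Weighting by the density gives
`(3/2)(1/3)³ / (12 n₁²) + (9/4)(1/9)³ / (12 n₂²) + (9/4)(1/9)³ / (12 n₃²)`.
-/

open MeasureTheory Set

/-- The density: `3/2` on `[0,1/3]`, `9/4` on `[2/3,7/9] ∪ [8/9,1]`, `0` elsewhere. -/
noncomputable def g (x : ℝ) : ℝ :=
  Set.indicator (Set.Icc (0 : ℝ) (1 / 3)) (fun _ => (3 : ℝ) / 2) x +
    Set.indicator (Set.Icc ((2 : ℝ) / 3) (7 / 9) ∪ Set.Icc ((8 : ℝ) / 9) 1)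
      (fun _ => (9 : ℝ) / 4) x

/-- The piecewise uniform probability measure with finitely many pieces. -/
noncomputable def Q : Measure ℝ :=
  MeasureTheory.volume.withDensity (fun x => ENNReal.ofReal (g x))

def subintervalMidpoints (c L : ℝ) (n : ℕ) : Set ℝ :=
  {y | ∃ i ∈ Finset.Icc 1 n, y = c + (2 * (i : ℝ) - 1) * L / (2 * n)}

noncomputable def minSqDist (S : Set ℝ) (x : ℝ) : ℝ :=
  sInf ((fun a => (x - a) ^ 2) '' S)

lemma minSqDist_eq_of_forall_abs_le {S : Set ℝ} {x m : ℝ} (hm : m ∈ S)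
    (hle : ∀ a ∈ S, |x - m| ≤ |x - a|) : minSqDist S x = (x - m) ^ 2 := by
  refine IsLeast.csInf_eq ⟨⟨m, hm, rfl⟩, ?_⟩
  rintro _ ⟨a, ha, rfl⟩
  simpa only [sq_abs] using pow_le_pow_left₀ (abs_nonneg _) (hle a ha) 2

lemma subintervalMidpoints_subset_Icc {c L : ℝ} (hL : 0 ≤ L) (n : ℕ) :
    subintervalMidpoints c L n ⊆ Icc c (c + L) := by
  rintro _ ⟨i, hi, rfl⟩
  obtain ⟨hi₁, hi₂⟩ := Finset.mem_Icc.mp hi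
  have hi₁' : (1 : ℝ) ≤ i := by exact_mod_cast hi₁
  have hi₂' : (i : ℝ) ≤ n := by exact_mod_cast hi₂
  have hn : (0 : ℝ) < n := by linarith
  constructor
  · have : 0 ≤ (2 * (i : ℝ) - 1) * L / (2 * n) := by
      apply div_nonneg (mul_nonneg (by linarith) hL) (by positivity)
    linarith
  · have : (2 * (i : ℝ) - 1) * L / (2 * n) ≤ L := by
      rw [div_le_iff₀ (by positivity)]; nlinarith
    linarith

lemma minSqDist_eq_on_cell {S : Set ℝ} {c L : ℝ} {n : ℕ} (hL : 0 < L) (hn : 0 < n)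
    (hsub : subintervalMidpoints c L n ⊆ S)
    (hfar : S ∩ Ioo (c - L / 2) (c + L + L / 2) ⊆ subintervalMidpoints c L n)
    {k : ℕ} (hk : k < n) :
    EqOn (minSqDist S) (fun x => (x - (c + (k + 1 / 2) * (L / n))) ^ 2)
      (Icc (c + k * (L / n)) (c + (k + 1) * (L / n))) := by
  intro x ⟨hx₁, hx₂⟩
  have hn' : (0 : ℝ) < n := by exact_mod_cast hn
  have hkn : (k : ℝ) + 1 ≤ n := by exact_mod_cast hk
  set δ := L / n with hδ
  have hδpos : 0 < δ := by positivity
  have hLδ : L = n * δ := by rw [hδ]; field_simp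
  set m := c + (k + 1 / 2) * δ with hm
  have hxm : |x - m| ≤ δ / 2 := abs_le.mpr ⟨by linarith, by linarith⟩
  have hmid : ∀ j : ℕ, c + (2 * (j : ℝ) - 1) * L / (2 * n) = c + (j - 1 / 2) * δ := by
    intro j; rw [hδ]; field_simp
  refine minSqDist_eq_of_forall_abs_le (hsub ⟨k + 1, by simp; omega, ?_⟩) fun a ha => ?_
  · rw [hmid, hm]; push_cast; ring
  by_cases haI : a ∈ Ioo (c - L / 2) (c + L + L / 2)
  · obtain ⟨j, hj, rfl⟩ := hfar ⟨ha, haI⟩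
    rw [hmid]
    rcases eq_or_ne j (k + 1) with rfl | hjk
    · rw [show c + (((k + 1 : ℕ) : ℝ) - 1 / 2) * δ = m by push_cast; ring]
    have hsep : δ ≤ |c + (j - 1 / 2) * δ - m| := by
      have hj1 : (1 : ℝ) ≤ |(j : ℝ) - (k + 1)| := by
        have : (j : ℤ) - (k + 1) ≠ 0 := by omega
        exact_mod_cast Int.one_le_abs this
      rw [show c + (j - 1 / 2) * δ - m = ((j : ℝ) - (k + 1)) * δ by ring, abs_mul,
        abs_of_pos hδpos]
      nlinarith
    linarith [abs_sub_le (c + (j - 1 / 2) * δ) x m, abs_sub_comm (c + (j - 1 / 2) * δ) x]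
  · have hk0 : (0 : ℝ) ≤ k := k.cast_nonneg
    have hcx : c ≤ x := by nlinarith
    have hxcL : x ≤ c + L := by rw [hLδ]; nlinarith
    have hδL : δ ≤ L := by rw [hLδ]; nlinarith
    simp only [mem_Ioo, not_and_or, not_lt] at haI
    rcases haI with haI | haI
    · linarith [le_abs_self (x - a)]
    · linarith [neg_abs_le (x - a)]

lemma integral_sq_sub_midpoint (a b : ℝ) :
    ∫ x in a..b, (x - (a + b) / 2) ^ 2 = (b - a) ^ 3 / 12 := by
  rw [intervalIntegral.integral_comp_sub_right (fun x => x ^ 2), integral_pow]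
  ring

lemma intervalIntegrable_minSqDist_cell {S : Set ℝ} {c L : ℝ} {n : ℕ} (hL : 0 < L)
    (hn : 0 < n) (hsub : subintervalMidpoints c L n ⊆ S)
    (hfar : S ∩ Ioo (c - L / 2) (c + L + L / 2) ⊆ subintervalMidpoints c L n)
    {k : ℕ} (hk : k < n) :
    IntervalIntegrable (minSqDist S) volume (c + k * (L / n)) (c + (k + 1) * (L / n)) := by
  have hle : c + k * (L / n) ≤ c + (k + 1) * (L / n) := by gcongr; linarith
  rw [intervalIntegrable_iff_integrableOn_Icc_of_le hle]
  exact (Continuous.integrableOn_Icc (by fun_prop)).congr_fun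
    (minSqDist_eq_on_cell hL hn hsub hfar hk).symm measurableSet_Icc

lemma integral_minSqDist_cell {S : Set ℝ} {c L : ℝ} {n : ℕ} (hL : 0 < L) (hn : 0 < n)
    (hsub : subintervalMidpoints c L n ⊆ S)
    (hfar : S ∩ Ioo (c - L / 2) (c + L + L / 2) ⊆ subintervalMidpoints c L n)
    {k : ℕ} (hk : k < n) :
    ∫ x in c + k * (L / n)..c + (k + 1) * (L / n), minSqDist S x = (L / n) ^ 3 / 12 := by
  have hle : c + k * (L / n) ≤ c + (k + 1) * (L / n) := by gcongr; linarith
  rw [intervalIntegral.integral_congr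
    ((uIcc_of_le hle).symm ▸ minSqDist_eq_on_cell hL hn hsub hfar hk)]
  convert integral_sq_sub_midpoint (c + k * (L / n)) (c + (k + 1) * (L / n)) using 3 <;> ring

lemma integrableOn_minSqDist {S : Set ℝ} {c L : ℝ} {n : ℕ} (hL : 0 < L) (hn : 0 < n)
    (hsub : subintervalMidpoints c L n ⊆ S)
    (hfar : S ∩ Ioo (c - L / 2) (c + L + L / 2) ⊆ subintervalMidpoints c L n) :
    IntegrableOn (minSqDist S) (Icc c (c + L)) := by
  rw [← intervalIntegrable_iff_integrableOn_Icc_of_le (by linarith)]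
  have h := IntervalIntegrable.trans_iterate (a := fun k : ℕ => c + k * (L / n)) fun k hk => by
    simpa using intervalIntegrable_minSqDist_cell hL hn hsub hfar hk
  simpa [mul_div_cancel₀ L (Nat.cast_ne_zero.mpr hn.ne')] using h

lemma setIntegral_minSqDist {S : Set ℝ} {c L : ℝ} {n : ℕ} (hL : 0 < L) (hn : 0 < n)
    (hsub : subintervalMidpoints c L n ⊆ S)
    (hfar : S ∩ Ioo (c - L / 2) (c + L + L / 2) ⊆ subintervalMidpoints c L n) :
    ∫ x in Icc c (c + L), minSqDist S x = L ^ 3 / (12 * n ^ 2) := by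
  rw [integral_Icc_eq_integral_Ioc, ← intervalIntegral.integral_of_le (by linarith)]
  have h := intervalIntegral.sum_integral_adjacent_intervals (μ := volume) (f := minSqDist S)
    (a := fun k : ℕ => c + k * (L / n)) fun k hk => by
      simpa using intervalIntegrable_minSqDist_cell hL hn hsub hfar hk
  have hn' : (n : ℝ) ≠ 0 := Nat.cast_ne_zero.mpr hn.ne'
  simp only [Nat.cast_zero, zero_mul, add_zero, mul_div_cancel₀ L hn', Nat.cast_add_one] at h
  rw [← h, Finset.sum_congr rfl fun k hk =>
    integral_minSqDist_cell hL hn hsub hfar (Finset.mem_range.mp hk)]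
  simp only [Finset.sum_const, Finset.card_range, nsmul_eq_mul]
  field_simp

lemma Q_eq : Q = ENNReal.ofReal (3 / 2) • volume.restrict (Icc 0 (1 / 3)) +
    ENNReal.ofReal (9 / 4) • (volume.restrict (Icc (2 / 3) (7 / 9)) +
      volume.restrict (Icc (8 / 9) 1)) := by
  have hdens : (fun x => ENNReal.ofReal (g x)) =
      (Icc (0 : ℝ) (1 / 3)).indicator (fun _ => ENNReal.ofReal (3 / 2)) +
      (Icc ((2 : ℝ) / 3) (7 / 9) ∪ Icc (8 / 9) 1).indicator
        (fun _ => ENNReal.ofReal (9 / 4)) := by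
    ext x
    rw [g, ENNReal.ofReal_add (indicator_nonneg (by norm_num) x)
      (indicator_nonneg (by norm_num) x)]
    simp only [Pi.add_apply, indicator_apply]
    split_ifs <;> simp
  have hdisj : Disjoint (Icc (2 / 3 : ℝ) (7 / 9)) (Icc (8 / 9) 1) :=
    disjoint_left.mpr fun x h h' => by linarith [h.2, h'.1]
  rw [Q, hdens, withDensity_add_left (measurable_const.indicator measurableSet_Icc),
    withDensity_indicator measurableSet_Icc,
    withDensity_indicator (measurableSet_Icc.union measurableSet_Icc), withDensity_const,
    withDensity_const, Measure.restrict_union hdisj measurableSet_Icc]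

lemma integral_Q {f : ℝ → ℝ} (h₁ : IntegrableOn f (Icc 0 (1 / 3)))
    (h₂ : IntegrableOn f (Icc (2 / 3) (7 / 9))) (h₃ : IntegrableOn f (Icc (8 / 9) 1)) :
    ∫ x, f x ∂Q = 3 / 2 * (∫ x in Icc 0 (1 / 3), f x) +
      9 / 4 * ((∫ x in Icc (2 / 3) (7 / 9), f x) + ∫ x in Icc (8 / 9) 1, f x) := by
  rw [Q_eq, integral_add_measure (h₁.smul_measure ENNReal.ofReal_ne_top)
      ((Integrable.add_measure h₂ h₃).smul_measure ENNReal.ofReal_ne_top),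
    integral_smul_measure, integral_smul_measure, integral_add_measure h₂ h₃,
    ENNReal.toReal_ofReal (by norm_num), ENNReal.toReal_ofReal (by norm_num), smul_eq_mul,
    smul_eq_mul]

lemma integral_minSqDist_subintervalMidpoints_Q {n₁ n₂ n₃ : ℕ} (h₁ : 0 < n₁) (h₂ : 0 < n₂)
    (h₃ : 0 < n₃) :
    ∫ x, minSqDist (subintervalMidpoints 0 (1 / 3) n₁ ∪
      subintervalMidpoints (2 / 3) (1 / 9) n₂ ∪ subintervalMidpoints (8 / 9) (1 / 9) n₃) x ∂Q =
      (1 / 216) * (1 / (n₁ : ℝ) ^ 2) + (1 / 3888) * (1 / (n₂ : ℝ) ^ 2 + 1 / (n₃ : ℝ) ^ 2) := by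
  have hM₁ := subintervalMidpoints_subset_Icc (c := 0) (L := 1 / 3) (by norm_num) n₁
  have hM₂ := subintervalMidpoints_subset_Icc (c := 2 / 3) (L := 1 / 9) (by norm_num) n₂
  have hM₃ := subintervalMidpoints_subset_Icc (c := 8 / 9) (L := 1 / 9) (by norm_num) n₃
  set S := subintervalMidpoints 0 (1 / 3) n₁ ∪ subintervalMidpoints (2 / 3) (1 / 9) n₂ ∪
    subintervalMidpoints (8 / 9) (1 / 9) n₃
  have far₁ : S ∩ Ioo (0 - 1 / 3 / 2) (0 + 1 / 3 + 1 / 3 / 2) ⊆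
      subintervalMidpoints 0 (1 / 3) n₁ := by
    rintro a ⟨(ha | ha) | ha, hI⟩
    · exact ha
    · linarith [(hM₂ ha).1, hI.2]
    · linarith [(hM₃ ha).1, hI.2]
  have far₂ : S ∩ Ioo (2 / 3 - 1 / 9 / 2) (2 / 3 + 1 / 9 + 1 / 9 / 2) ⊆
      subintervalMidpoints (2 / 3) (1 / 9) n₂ := by
    rintro a ⟨(ha | ha) | ha, hI⟩
    · linarith [(hM₁ ha).2, hI.1]
    · exact ha
    · linarith [(hM₃ ha).1, hI.2]
  have far₃ : S ∩ Ioo (8 / 9 - 1 / 9 / 2) (8 / 9 + 1 / 9 + 1 / 9 / 2) ⊆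
      subintervalMidpoints (8 / 9) (1 / 9) n₃ := by
    rintro a ⟨(ha | ha) | ha, hI⟩
    · linarith [(hM₁ ha).2, hI.1]
    · linarith [(hM₂ ha).2, hI.1]
    · exact ha
  have i₁ := integrableOn_minSqDist (by norm_num) h₁
    (subset_union_left.trans subset_union_left) far₁
  have i₂ := integrableOn_minSqDist (by norm_num) h₂
    (subset_union_right.trans subset_union_left) far₂
  have i₃ := integrableOn_minSqDist (by norm_num) h₃ subset_union_right far₃
  have v₁ := setIntegral_minSqDist (by norm_num) h₁
    (subset_union_left.trans subset_union_left) far₁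
  have v₂ := setIntegral_minSqDist (by norm_num) h₂
    (subset_union_right.trans subset_union_left) far₂
  have v₃ := setIntegral_minSqDist (by norm_num) h₃ subset_union_right far₃
  norm_num at i₁ i₂ i₃ v₁ v₂ v₃
  rw [integral_Q i₁ i₂ i₃, v₁, v₂, v₃]
  field_simp
  ring

theorem stmt_17 (n₁ n₂ n₃ : ℕ) (h₁ : 0 < n₁) (h₂ : 0 < n₂) (h₃ : 0 < n₃) :
    (∫ x, sInf ((fun a => (x - a) ^ 2) ''
        ({y : ℝ | ∃ i ∈ Finset.Icc 1 n₁, y = (2 * (i : ℝ) - 1) / (6 * n₁)} ∪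
         {y : ℝ | ∃ i ∈ Finset.Icc 1 n₂, y = 2 / 3 + (2 * (i : ℝ) - 1) / (18 * n₂)} ∪
         {y : ℝ | ∃ i ∈ Finset.Icc 1 n₃, y = 8 / 9 + (2 * (i : ℝ) - 1) / (18 * n₃)})) ∂Q) =
      (1 / 216) * (1 / (n₁ : ℝ) ^ 2) + (1 / 3888) * (1 / (n₂ : ℝ) ^ 2 + 1 / (n₃ : ℝ) ^ 2) := by
  have hS : {y : ℝ | ∃ i ∈ Finset.Icc 1 n₁, y = (2 * (i : ℝ) - 1) / (6 * n₁)} ∪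
      {y : ℝ | ∃ i ∈ Finset.Icc 1 n₂, y = 2 / 3 + (2 * (i : ℝ) - 1) / (18 * n₂)} ∪
      {y : ℝ | ∃ i ∈ Finset.Icc 1 n₃, y = 8 / 9 + (2 * (i : ℝ) - 1) / (18 * n₃)} =
      subintervalMidpoints 0 (1 / 3) n₁ ∪ subintervalMidpoints (2 / 3) (1 / 9) n₂ ∪
        subintervalMidpoints (8 / 9) (1 / 9) n₃ := by
    simp only [subintervalMidpoints]
    congr! 7 <;> ring_nf
  rw [hS]
  exact integral_minSqDist_subintervalMidpoints_Q h₁ h₂ h₃
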